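/- arXiv:0801.0480 — 3 statements merged into one kernel-verified Lean document; each statement's English description precedes it below -/
import Mathlib

section
/- Let q be a real number with 0 < q < 1, let n ≥ 0 be an integer and let k ≥ 1 be an odd positive integer. Then [2]_q Σ_{l=0}^{k−1} (−1)^l [l]_q^n = (q^{kn} + 1) E_{n,q} + Σ_{l=0}^{n−1} C(n,l) q^{kl} E_{l,q} [k]_q^{n−l}. -/
open Finset

/-- The q-analogue `[x]_q = (1 - q^x)/(1 - q)` for real `x` (using the real power `q ^ x`). -/
noncomputable def qNum (q x : ℝ) : ℝ := (1 - q ^ x) / (1 - q)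

/-- The q-Euler polynomial
`E_n(x, h | q) = [2]_q (1-q)^{-n} Σ_{l=0}^{n} C(n,l) (-1)^l q^{lx} / (1 + q^{l+h})`. -/
noncomputable def qEuler (q : ℝ) (n h : ℕ) (x : ℝ) : ℝ :=
  (1 + q) * ((1 - q) ^ n)⁻¹ *
    ∑ l ∈ range (n + 1), (n.choose l : ℝ) * (-1) ^ l * q ^ ((l : ℝ) * x) / (1 + q ^ (l + h))

/-! Expanding `[l]_q ^ n = (1 - q)⁻ⁿ Σ_j C(n,j) (-1)^j q^{jl}` and summing the alternating
geometric series `Σ_{l<k} (-q^j)^l = (1 + q^{jk}) / (1 + q^j)` (here `k` is odd and `q ≥ 0` keeps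
the denominators nonzero) gives `[2]_q Σ_{l<k} (-1)^l [l]_q^n = E_{n,q}(0) + E_{n,q}(k)`.
The translation formula `E_{n,q}(m) = Σ_{l≤n} C(n,l) q^{ml} E_{l,q} [m]_q^{n-l}` comes from the
trinomial revision `C(n,l) C(l,j) = C(n,j) C(n-j,l-j)` together with `q^m + (1 - q^m) = 1`.
For `m = k` its term `l = n` is `q^{kn} E_{n,q}`, which accounts for the factor `q^{kn} + 1`. -/

theorem alternating_geom_sum_of_odd {K : Type*} [Field K] {x : K} (hx : x + 1 ≠ 0) {k : ℕ}
    (hk : Odd k) : ∑ l ∈ range k, (-1) ^ l * x ^ l = (x ^ k + 1) / (x + 1) := by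
  have hx' : -x ≠ 1 := fun h => hx (by rw [← neg_neg x, h]; ring)
  simp_rw [← mul_pow, neg_one_mul]
  rw [geom_sum_eq hx', hk.neg_pow, ← neg_add', ← neg_add', neg_div_neg_eq]

theorem sum_choose_mul_choose_mul_pow {R : Type*} [CommSemiring R] {n j : ℕ} (hj : j ≤ n)
    (a b : R) :
    ∑ l ∈ range (n + 1), (n.choose l * l.choose j : R) * a ^ l * b ^ (n - l)
      = n.choose j * a ^ j * (a + b) ^ (n - j) := by
  obtain ⟨m, rfl⟩ := Nat.exists_eq_add_of_le hj
  rw [add_assoc, sum_range_add, sum_eq_zero fun l hl => by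
    simp [Nat.choose_eq_zero_of_lt (mem_range.1 hl)], zero_add, Nat.add_sub_cancel_left,
    add_pow, mul_sum]
  refine sum_congr rfl fun i _ => ?_
  have hchoose := Nat.choose_mul (n := j + m) (Nat.le_add_right j i)
  simp only [Nat.add_sub_cancel_left] at hchoose
  rw [← Nat.cast_mul, hchoose, Nat.cast_mul, pow_add, Nat.add_sub_add_left]
  ring

theorem sum_range_succ_choose_mul_of_le {R : Type*} [Semiring R] (f : ℕ → R) {l n : ℕ}
    (hl : l ≤ n) :
    ∑ j ∈ range (l + 1), (l.choose j : R) * f j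
      = ∑ j ∈ range (n + 1), (l.choose j : R) * f j := by
  refine sum_subset (range_subset_range.2 (by omega)) fun j _ hj => ?_
  rw [Nat.choose_eq_zero_of_lt (by simpa using hj), Nat.cast_zero, zero_mul]

theorem qNum_natCast (q : ℝ) (m : ℕ) : qNum q m = (1 - q ^ m) / (1 - q) := by
  rw [qNum, Real.rpow_natCast]

theorem qEuler_natCast (q : ℝ) (n m : ℕ) :
    qEuler q n 0 m = (1 + q) * ((1 - q) ^ n)⁻¹ *
      ∑ j ∈ range (n + 1), (n.choose j : ℝ) * ((-1) ^ j * (q ^ m) ^ j / (1 + q ^ j)) := by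
  simp_rw [qEuler, ← pow_mul, mul_comm m, ← Nat.cast_mul, Real.rpow_natCast, add_zero,
    mul_div_assoc, mul_assoc]

theorem qEuler_zero (q : ℝ) (n : ℕ) :
    qEuler q n 0 0 = (1 + q) * ((1 - q) ^ n)⁻¹ *
      ∑ j ∈ range (n + 1), (n.choose j : ℝ) * ((-1) ^ j / (1 + q ^ j)) := by
  simpa using qEuler_natCast q n 0

theorem qEuler_natCast_eq_sum (q : ℝ) (n m : ℕ) :
    qEuler q n 0 m = ∑ l ∈ range (n + 1),
      (n.choose l : ℝ) * q ^ (m * l) * qEuler q l 0 0 * qNum q m ^ (n - l) := by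
  have hterm : ∀ l ∈ range (n + 1),
      (n.choose l : ℝ) * q ^ (m * l) * qEuler q l 0 0 * qNum q m ^ (n - l)
        = (1 + q) * ((1 - q) ^ n)⁻¹ * ∑ j ∈ range (n + 1), (n.choose l * l.choose j : ℝ)
            * (q ^ m) ^ l * (1 - q ^ m) ^ (n - l) * ((-1) ^ j / (1 + q ^ j)) := by
    intro l hl
    have hl : l ≤ n := Nat.lt_succ_iff.1 (mem_range.1 hl)
    have hpow : ((1 - q) ^ l)⁻¹ * ((1 - q) ^ (n - l))⁻¹ = ((1 - q) ^ n)⁻¹ := by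
      rw [← mul_inv, ← pow_add, Nat.add_sub_cancel' hl]
    rw [qEuler_zero, sum_range_succ_choose_mul_of_le _ hl, qNum_natCast, div_pow, ← hpow,
      pow_mul]
    simp only [mul_sum, sum_mul]
    refine sum_congr rfl fun j _ => ?_
    ring
  rw [sum_congr rfl hterm, ← mul_sum, sum_comm, qEuler_natCast]
  congr 1
  refine sum_congr rfl fun j hj => ?_
  rw [← sum_mul, sum_choose_mul_choose_mul_pow (Nat.lt_succ_iff.1 (mem_range.1 hj)),
    add_sub_cancel, one_pow, mul_one]
  ring

theorem alternating_sum_qNum_pow {q : ℝ} (hq : 0 ≤ q) (n : ℕ) {k : ℕ} (hk : Odd k) :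
    (1 + q) * ∑ l ∈ range k, (-1) ^ l * qNum q l ^ n = qEuler q n 0 0 + qEuler q n 0 k := by
  have hexpand (l : ℕ) : qNum q l ^ n = ((1 - q) ^ n)⁻¹ *
      ∑ j ∈ range (n + 1), (n.choose j : ℝ) * (-1) ^ j * (q ^ j) ^ l := by
    rw [qNum_natCast, div_pow, div_eq_inv_mul, sub_eq_neg_add 1 (q ^ l), add_pow]
    refine congrArg _ (sum_congr rfl fun j _ => ?_)
    rw [neg_pow, ← pow_mul, ← pow_mul, mul_comm l j, one_pow]
    ring
  have hgeom (j : ℕ) :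
      ∑ l ∈ range k, (-1) ^ l * (q ^ j) ^ l = ((q ^ j) ^ k + 1) / (q ^ j + 1) :=
    alternating_geom_sum_of_odd (by positivity) hk
  calc (1 + q) * ∑ l ∈ range k, (-1) ^ l * qNum q l ^ n
      = (1 + q) * ((1 - q) ^ n)⁻¹ * ∑ j ∈ range (n + 1), (n.choose j : ℝ) * (-1) ^ j *
          ∑ l ∈ range k, (-1) ^ l * (q ^ j) ^ l := by
        simp_rw [hexpand, mul_sum]
        rw [sum_comm]
        exact sum_congr rfl fun j _ => sum_congr rfl fun l _ => by ring
    _ = qEuler q n 0 0 + qEuler q n 0 k := by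
        rw [qEuler_zero, qEuler_natCast, ← mul_add, ← sum_add_distrib]
        refine congrArg _ (sum_congr rfl fun j _ => ?_)
        rw [hgeom, ← pow_mul, ← pow_mul, mul_comm j k]
        field_simp
        ring

theorem qEuler_odd_identity_general (q : ℝ) (hq0 : 0 < q)
    (n k : ℕ) (hko : Odd k) :
    (1 + q) * ∑ l ∈ range k, (-1 : ℝ) ^ l * (qNum q (l : ℝ)) ^ n
      = (q ^ (k * n) + 1) * qEuler q n 0 0
        + ∑ l ∈ range n, (n.choose l : ℝ) * q ^ (k * l) * qEuler q l 0 0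
            * (qNum q (k : ℝ)) ^ (n - l) := by
  rw [alternating_sum_qNum_pow hq0.le n hko, qEuler_natCast_eq_sum, sum_range_succ,
    Nat.choose_self, Nat.sub_self, Nat.cast_one, pow_zero]
  ring

/-- for odd `k ≥ 1`,
`[2]_q Σ_{l=0}^{k-1} (-1)^l [l]_qⁿ = (q^{kn} + 1) E_{n,q} + Σ_{l=0}^{n-1} C(n,l) q^{kl} E_{l,q} [k]_q^{n-l}`. -/
theorem qEuler_odd_identity (q : ℝ) (hq0 : 0 < q) (hq1 : q < 1)
    (n k : ℕ) (hk : 1 ≤ k) (hko : Odd k) :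
    (1 + q) * ∑ l ∈ range k, (-1 : ℝ) ^ l * (qNum q (l : ℝ)) ^ n
      = (q ^ (k * n) + 1) * qEuler q n 0 0
        + ∑ l ∈ range n, (n.choose l : ℝ) * q ^ (k * l) * qEuler q l 0 0
            * (qNum q (k : ℝ)) ^ (n - l) :=
  qEuler_odd_identity_general q hq0 n k hko
end

section
/- Let q be a real number with 0 < q < 1. Then the q-Euler numbers satisfy the recurrence E_{0,q} = [2]_q / 2, and for every integer n ≥ 1, (1 + q^n) E_{n,q} = − Σ_{l=0}^{n−1} C(n,l) q^l E_{l,q}; equivalently E_{n,q} = −(1/[2]_{q^n}) Σ_{l=0}^{n−1} C(n,l) q^l E_{l,q} where [2]_{q^n} = 1 + q^n. -/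
open Finset

/-! Write `E_{n,q} = [2]_q (1-q)^{-n} Σ_j C(n,j) c_j` with `c_j = (-1)^j / (1 + q^j)`. The binomial
convolution identity `Σ_l C(n,l) x^l y^{n-l} Σ_j C(l,j) c_j = Σ_j C(n,j) x^j (x+y)^{n-j} c_j`, taken at
`x = q`, `y = 1 - q`, gives `Σ_l C(n,l) q^l E_{l,q} = [2]_q (1-q)^{-n} Σ_j C(n,j) q^j c_j`. Adding `E_{n,q}`
multiplies each `c_j` by `1 + q^j`, which leaves `[2]_q (1-q)^{-n} Σ_j (-1)^j C(n,j) = 0` for `n ≥ 1`. -/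

section BinomialTransform

variable {R : Type*} [CommSemiring R]

theorem sum_Ico_choose_mul_choose_mul_pow (x y : R) {j n : ℕ} (hjn : j ≤ n) :
    ∑ l ∈ Ico j (n + 1), (n.choose l * l.choose j : R) * (x ^ l * y ^ (n - l))
      = n.choose j * x ^ j * (x + y) ^ (n - j) := by
  rw [sum_Ico_eq_sum_range, show n + 1 - j = n - j + 1 by omega, add_pow, mul_sum]
  refine sum_congr rfl fun m hm => ?_
  have hm : m ≤ n - j := Nat.lt_succ_iff.mp (mem_range.mp hm)
  have hchoose : (n.choose (j + m) * (j + m).choose j : R) = n.choose j * (n - j).choose m := by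
    have h := Nat.choose_mul (n := n) (Nat.le_add_right j m)
    rw [Nat.add_sub_cancel_left] at h
    exact_mod_cast congrArg (Nat.cast : ℕ → R) h
  rw [hchoose, pow_add, Nat.sub_add_eq]
  ring

theorem sum_choose_mul_pow_mul_sum_choose (x y : R) (c : ℕ → R) (n : ℕ) :
    ∑ l ∈ range (n + 1), (n.choose l : R) * (x ^ l * y ^ (n - l)) *
        ∑ j ∈ range (l + 1), (l.choose j : R) * c j
      = ∑ j ∈ range (n + 1), (n.choose j : R) * x ^ j * (x + y) ^ (n - j) * c j := by
  simp only [mul_sum, range_eq_Ico]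
  rw [← sum_Ico_Ico_comm 0 (n + 1)
    fun j l => (n.choose l : R) * (x ^ l * y ^ (n - l)) * (l.choose j * c j)]
  refine sum_congr rfl fun j hj => ?_
  rw [← sum_Ico_choose_mul_choose_mul_pow x y (by simpa [Nat.lt_succ_iff] using hj), sum_mul]
  exact sum_congr rfl fun l _ => by ring

end BinomialTransform

theorem sum_choose_mul_pow_mul_inv_sum_choose {K : Type*} [Field K] {q : K} (hq : q ≠ 1)
    (c : ℕ → K) (n : ℕ) :
    ∑ l ∈ range (n + 1), (n.choose l : K) * q ^ l * (((1 - q) ^ l)⁻¹ *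
        ∑ j ∈ range (l + 1), (l.choose j : K) * c j)
      = ((1 - q) ^ n)⁻¹ * ∑ j ∈ range (n + 1), (n.choose j : K) * q ^ j * c j := by
  have h1q : 1 - q ≠ 0 := sub_ne_zero.mpr hq.symm
  have := sum_choose_mul_pow_mul_sum_choose q (1 - q) c n
  simp only [add_sub_cancel, one_pow, mul_one] at this
  rw [← this, mul_sum]
  refine sum_congr rfl fun l hl => ?_
  rw [pow_sub₀ _ h1q (Nat.lt_succ_iff.mp (mem_range.mp hl))]
  field_simp

theorem qEuler_zero_zero (q : ℝ) (n : ℕ) :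
    qEuler q n 0 0 = (1 + q) * (((1 - q) ^ n)⁻¹ *
      ∑ l ∈ range (n + 1), (n.choose l : ℝ) * ((-1) ^ l / (1 + q ^ l))) := by
  simp only [qEuler, mul_zero, Real.rpow_zero, add_zero, mul_div_assoc, mul_one, mul_assoc]

theorem sum_choose_mul_pow_mul_qEuler_add_qEuler {q : ℝ} (hq0 : 0 ≤ q) (hq1 : q ≠ 1) {n : ℕ}
    (hn : n ≠ 0) :
    ∑ l ∈ range (n + 1), (n.choose l : ℝ) * q ^ l * qEuler q l 0 0 + qEuler q n 0 0 = 0 := by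
  simp only [qEuler_zero_zero, mul_left_comm _ (1 + q), ← mul_sum]
  rw [sum_choose_mul_pow_mul_inv_sum_choose hq1, ← mul_add, ← mul_add, ← sum_add_distrib]
  have hterm : ∀ j ∈ range (n + 1), (n.choose j : ℝ) * q ^ j * ((-1) ^ j / (1 + q ^ j))
      + n.choose j * ((-1) ^ j / (1 + q ^ j)) = (-1) ^ j * n.choose j := fun j _ => by
    field_simp
    ring
  have hzero : ∑ j ∈ range (n + 1), ((-1) ^ j * n.choose j : ℝ) = 0 := by
    exact_mod_cast Int.alternating_sum_range_choose_of_ne hn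
  rw [sum_congr rfl hterm, hzero, mul_zero, mul_zero]

/-- the recurrence for the q-Euler numbers:
`E_{0,q} = [2]_q / 2` and, for `n ≥ 1`,
`(1 + qⁿ) E_{n,q} = - Σ_{l=0}^{n-1} C(n,l) q^l E_{l,q}`, equivalently
`E_{n,q} = -(1/(1+qⁿ)) Σ_{l=0}^{n-1} C(n,l) q^l E_{l,q}`. -/
theorem qEuler_number_recurrence (q : ℝ) (hq0 : 0 < q) (hq1 : q < 1) :
    qEuler q 0 0 0 = (1 + q) / 2 ∧
    ∀ n : ℕ, 1 ≤ n →
      (1 + q ^ n) * qEuler q n 0 0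
          = - ∑ l ∈ range n, (n.choose l : ℝ) * q ^ l * qEuler q l 0 0 ∧
      qEuler q n 0 0
          = - (1 / (1 + q ^ n)) * ∑ l ∈ range n, (n.choose l : ℝ) * q ^ l * qEuler q l 0 0 := by
  refine ⟨by norm_num [qEuler_zero_zero]; ring, fun n hn => ?_⟩
  have hsum := sum_choose_mul_pow_mul_qEuler_add_qEuler hq0.le hq1.ne (Nat.one_le_iff_ne_zero.mp hn)
  rw [sum_range_succ, Nat.choose_self, Nat.cast_one, one_mul] at hsum
  have hden : 1 + q ^ n ≠ 0 := by positivity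
  refine ⟨by linear_combination hsum, ?_⟩
  field_simp
  linear_combination hsum
end

section
/- Let q be a real number with 0 < q < 1, let h ≥ 1 be an integer and let n ≥ 1 be an integer. Then the series [2]_q Σ_{m=1}^∞ (−1)^m q^{mh} [m]_q^n converges absolutely, and its sum equals E_n(h | q); that is, the q-Euler zeta function ζ_{E,q}(s | h) = [2]_q Σ_{m=1}^∞ (−1)^m q^{mh} / [m]_q^s, evaluated at s = −n, interpolates the q-Euler numbers: ζ_{E,q}(−n | h) = E_n(h | q). -/
open Finset

theorem one_sub_pow_eq_sum {R : Type*} [CommRing R] (x : R) (n : ℕ) :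
    (1 - x) ^ n = ∑ l ∈ range (n + 1), (n.choose l : R) * (-1) ^ l * x ^ l := by
  rw [sub_eq_neg_add, add_pow]
  refine sum_congr rfl fun l _ => ?_
  rw [neg_pow, one_pow, mul_one]
  ring

theorem sum_range_choose_mul_neg_one_pow {R : Type*} [CommRing R] {n : ℕ} (hn : n ≠ 0) :
    ∑ l ∈ range (n + 1), (n.choose l : R) * (-1) ^ l = 0 := by
  simpa [hn] using (one_sub_pow_eq_sum (1 : R) n).symm

theorem neg_one_pow_mul_qNum_pow_eq_sum (q : ℝ) (h n m : ℕ) :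
    (-1) ^ m * q ^ (m * h) * qNum q m ^ n =
      ∑ l ∈ range (n + 1), ((1 - q) ^ n)⁻¹ * n.choose l * (-1) ^ l * (-q ^ (h + l)) ^ m := by
  rw [qNum_natCast, div_pow, one_sub_pow_eq_sum, div_eq_inv_mul, mul_sum, mul_sum]
  refine sum_congr rfl fun l _ => ?_
  rw [neg_pow (q ^ (h + l)), ← pow_mul, ← pow_mul]
  ring

theorem hasSum_neg_pow_succ {r : ℝ} (hr : |r| < 1) :
    HasSum (fun m : ℕ => (-r) ^ (m + 1)) ((1 + r)⁻¹ - 1) := by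
  have hr' : 1 + r ≠ 0 := by linarith [neg_abs_le r]
  have hlimit : (1 + r)⁻¹ - 1 = -r * (1 - -r)⁻¹ := by
    rw [sub_neg_eq_add]
    field_simp
    ring
  rw [hlimit]
  simpa only [pow_succ'] using
    (hasSum_geometric_of_abs_lt_one (r := -r) (by rwa [abs_neg])).mul_left (-r)

theorem hasSum_neg_one_pow_mul_qNum_pow {q : ℝ} (hq0 : 0 < q) (hq1 : q < 1) {h : ℕ} (hh : 1 ≤ h)
    (n : ℕ) :
    HasSum (fun m : ℕ => (-1 : ℝ) ^ (m + 1) * q ^ ((m + 1) * h) * qNum q ((m : ℝ) + 1) ^ n)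
      (∑ l ∈ range (n + 1),
        ((1 - q) ^ n)⁻¹ * n.choose l * (-1) ^ l * ((1 + q ^ (h + l))⁻¹ - 1)) := by
  have hratio (l : ℕ) : |q ^ (h + l)| < 1 := by
    rw [abs_of_pos (pow_pos hq0 _)]
    exact pow_lt_one₀ hq0.le hq1 (by omega)
  simp_rw [← Nat.cast_succ, neg_one_pow_mul_qNum_pow_eq_sum]
  exact hasSum_sum fun l _ => (hasSum_neg_pow_succ (hratio l)).mul_left _

theorem qEuler_zero_eq_sum (q : ℝ) {n : ℕ} (hn : n ≠ 0) (h : ℕ) :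
    qEuler q n h 0 = (1 + q) *
      ∑ l ∈ range (n + 1), ((1 - q) ^ n)⁻¹ * n.choose l * (-1) ^ l * ((1 + q ^ (h + l))⁻¹ - 1) := by
  have hconst : ∑ l ∈ range (n + 1), ((1 - q) ^ n)⁻¹ * n.choose l * (-1) ^ l = 0 := by
    simp_rw [mul_assoc, ← mul_sum, sum_range_choose_mul_neg_one_pow hn, mul_zero]
  simp_rw [mul_sub, mul_one, sum_sub_distrib, hconst, sub_zero, qEuler, mul_zero,
    Real.rpow_zero, add_comm h, mul_assoc, ← mul_sum, div_eq_mul_inv, mul_one, mul_assoc]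

/-- the series `[2]_q Σ_{m=1}^∞ (-1)^m q^{mh} [m]_qⁿ` converges absolutely and
equals `E_n(h|q)`, i.e. `ζ_{E,q}(-n | h) = E_n(h|q)`. -/
theorem qEuler_zeta_at_neg_int (q : ℝ) (hq0 : 0 < q) (hq1 : q < 1)
    (h : ℕ) (hh : 1 ≤ h) (n : ℕ) (hn : 1 ≤ n) :
    Summable (fun m : ℕ => |(-1 : ℝ) ^ (m + 1) * q ^ ((m + 1) * h) * (qNum q ((m : ℝ) + 1)) ^ n|) ∧
    (1 + q) * ∑' m : ℕ, (-1 : ℝ) ^ (m + 1) * q ^ ((m + 1) * h) * (qNum q ((m : ℝ) + 1)) ^ n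
      = qEuler q n h 0 := by
  have hsum := hasSum_neg_one_pow_mul_qNum_pow hq0 hq1 hh n
  exact ⟨hsum.summable.abs, by rw [hsum.tsum_eq, qEuler_zero_eq_sum q (by omega) h]⟩
end
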